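/- For every f in C_Z([0,1]) (continuous on [0,1] with f(0), f(1) integers) and every natural n >= 2, and every integer t with 0 <= t <= n/2, there exist integers q_0,...,q_n such that sup_{x in [0,1]} |f(x) - sum_{k=0}^n q_k binom(n,k) x^k (1-x)^(n-k)| <= (5/4) omega_f(n^{-1/2}) + max(omega_f(t/n), 1/(2(n+1-2t))) + 1/sqrt(2(t+1)). -/

import Mathlib

/-!
Write `b_{n,k}(x)` for the Bernstein basis and fix `s = max t 1`. For `k < s` or `k > n - s`
take `q_k = round (f (k/n))`: since `f 0` and `f 1` are integers, the error there is at most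
`ω(t/n)`, and these nodes carry total Bernstein weight at most `1`. For `s ≤ k ≤ n - s` round the
partial sums of the nodal values instead, so that `f (k/n) - q_k = E (k+1) - E k` with `|E| ≤ 1/2`.
Summation by parts against the unimodal sequence `k ↦ b_{n,k}(x)` bounds the contribution of the
middle nodes by the largest middle basis value, which Stirling's formula and AM-GM bound by
`1/√(2(t+1))`. The classical estimate `(1 + x(1-x)) ω(n^{-1/2})` of the Bernstein operator accounts
for the rest.
-/

/-- Modulus of continuity of `f` on `[0,1]`. -/
noncomputable def modCont (f : ℝ → ℝ) (δ : ℝ) : ℝ :=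
  sSup {d : ℝ | ∃ x ∈ Set.Icc (0:ℝ) 1, ∃ y ∈ Set.Icc (0:ℝ) 1,
    |x - y| ≤ δ ∧ d = |f x - f y|}

open Finset Real Stirling

noncomputable def bernsteinBasis (n k : ℕ) (x : ℝ) : ℝ :=
  n.choose k * x ^ k * (1 - x) ^ (n - k)

section BernsteinBasis

variable {n k l t : ℕ} {x : ℝ}

lemma bernsteinBasis_nonneg (hx : x ∈ Set.Icc (0:ℝ) 1) (n k : ℕ) : 0 ≤ bernsteinBasis n k x := by
  have : 0 ≤ 1 - x := sub_nonneg.2 hx.2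
  have := hx.1
  unfold bernsteinBasis; positivity

lemma eval_bernsteinPolynomial (n k : ℕ) (x : ℝ) :
    (bernsteinPolynomial ℝ n k).eval x = bernsteinBasis n k x := by
  simp [bernsteinPolynomial, bernsteinBasis]

lemma sum_bernsteinBasis (n : ℕ) (x : ℝ) : ∑ k ∈ range (n + 1), bernsteinBasis n k x = 1 := by
  simpa [Polynomial.eval_finsetSum, eval_bernsteinPolynomial] using
    congrArg (Polynomial.eval x) (bernsteinPolynomial.sum ℝ n)

lemma sum_sq_mul_bernsteinBasis (n : ℕ) (x : ℝ) :
    ∑ k ∈ range (n + 1), (n * x - k) ^ 2 * bernsteinBasis n k x = n * x * (1 - x) := by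
  simpa [Polynomial.eval_finsetSum, eval_bernsteinPolynomial, nsmul_eq_mul] using
    congrArg (Polynomial.eval x) (bernsteinPolynomial.variance ℝ n)

lemma bernsteinBasis_symm (hk : k ≤ n) (x : ℝ) :
    bernsteinBasis n k x = bernsteinBasis n (n - k) (1 - x) := by
  unfold bernsteinBasis
  rw [← Nat.choose_symm hk, sub_sub_cancel, Nat.sub_sub_self hk]
  ring

lemma succ_mul_bernsteinBasis_succ (hk : k < n) (x : ℝ) :
    (k + 1) * (1 - x) * bernsteinBasis n (k + 1) x = (n - k) * x * bernsteinBasis n k x := by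
  have hchoose : (n.choose (k + 1) : ℝ) * (k + 1) = n.choose k * (n - k) := by
    have h := congrArg (Nat.cast : ℕ → ℝ) (Nat.choose_succ_right_eq n k)
    push_cast [Nat.cast_sub hk.le] at h
    exact h
  obtain ⟨l, rfl⟩ := Nat.exists_eq_add_of_lt hk
  unfold bernsteinBasis
  rw [show k + l + 1 - (k + 1) = l by omega, show k + l + 1 - k = l + 1 by omega]
  linear_combination x ^ (k + 1) * (1 - x) ^ (l + 1) * hchoose

lemma bernsteinBasis_le_succ (hk : k < n) (hx : x ∈ Set.Icc (0:ℝ) 1)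
    (hmode : k + 1 ≤ (n + 1) * x) : bernsteinBasis n k x ≤ bernsteinBasis n (k + 1) x := by
  rcases hx.2.lt_or_eq with hx1 | rfl
  · have hpos : 0 < ((k:ℝ) + 1) * (1 - x) := by have := sub_pos.2 hx1; positivity
    refine le_of_mul_le_mul_left ?_ hpos
    rw [succ_mul_bernsteinBasis_succ hk x]
    exact mul_le_mul_of_nonneg_right (by nlinarith) (bernsteinBasis_nonneg hx n k)
  · rw [show bernsteinBasis n k 1 = 0 by simp [bernsteinBasis, Nat.sub_ne_zero_of_lt hk]]
    exact bernsteinBasis_nonneg hx n (k + 1)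

lemma bernsteinBasis_succ_le (hk : k < n) (hx : x ∈ Set.Icc (0:ℝ) 1)
    (hmode : (n + 1) * x ≤ k + 1) : bernsteinBasis n (k + 1) x ≤ bernsteinBasis n k x := by
  have hkn : (k:ℝ) + 1 ≤ n := by exact_mod_cast hk
  have hpos : 0 < ((k:ℝ) + 1) * (1 - x) := by
    have : 0 < 1 - x := by nlinarith [hx.1]
    positivity
  refine le_of_mul_le_mul_left ?_ hpos
  rw [succ_mul_bernsteinBasis_succ hk x]
  exact mul_le_mul_of_nonneg_right (by nlinarith) (bernsteinBasis_nonneg hx n k)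

lemma exists_bernsteinBasis_mode {lo hi : ℕ} (hlohi : lo ≤ hi) (hhi : hi ≤ n)
    (hx : x ∈ Set.Icc (0:ℝ) 1) :
    ∃ m ∈ Set.Icc lo hi,
      (∀ k, lo ≤ k → k < m → bernsteinBasis n k x ≤ bernsteinBasis n (k + 1) x) ∧
      (∀ k, m ≤ k → k < hi → bernsteinBasis n (k + 1) x ≤ bernsteinBasis n k x) := by
  set F := ⌊((n:ℝ) + 1) * x⌋₊
  have hF : 0 ≤ ((n:ℝ) + 1) * x := by have := hx.1; positivity
  refine ⟨max lo (min hi F), ⟨le_max_left _ _, max_le hlohi (min_le_left _ _)⟩, ?_, ?_⟩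
  · intro k _ hkm
    refine bernsteinBasis_le_succ (by omega) hx ?_
    have : ((k + 1 : ℕ) : ℝ) ≤ F := by exact_mod_cast (show k + 1 ≤ F by omega)
    push_cast at this
    exact this.trans (Nat.floor_le hF)
  · intro k hmk hkhi
    have hFk : (F : ℝ) + 1 ≤ k + 1 := by exact_mod_cast (show F + 1 ≤ k + 1 by omega)
    exact bernsteinBasis_succ_le (by omega) hx ((Nat.lt_floor_add_one _).le.trans hFk)

lemma pow_mul_one_sub_pow_le (hk : k ≠ 0) (hl : l ≠ 0) (hx : x ∈ Set.Icc (0:ℝ) 1) :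
    x ^ k * (1 - x) ^ l ≤ (k / (k + l)) ^ k * (l / (k + l)) ^ l := by
  have hk' : (0:ℝ) < k := by positivity
  have hl' : (0:ℝ) < l := by positivity
  have hN : (0:ℝ) < k + l := by positivity
  have hx0 := hx.1
  have hx1 : 0 ≤ 1 - x := sub_nonneg.2 hx.2
  set p₁ := (k + l) * x / k
  set p₂ := (k + l) * (1 - x) / l
  have hp₁ : 0 ≤ p₁ := by positivity
  have hp₂ : 0 ≤ p₂ := by positivity
  -- the weighted arithmetic mean of `p₁, p₂` is `x + (1 - x) = 1`
  have hamgm : p₁ ^ ((k:ℝ) / (k + l)) * p₂ ^ ((l:ℝ) / (k + l)) ≤ 1 := by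
    refine (geom_mean_le_arith_mean2_weighted (by positivity) (by positivity) hp₁ hp₂
      (by field_simp)).trans_eq ?_
    simp only [p₁, p₂]
    field_simp
    ring_nf
  have hprod : p₁ ^ k * p₂ ^ l ≤ 1 := by
    have := pow_le_one₀ (n := k + l) (by positivity) hamgm
    rwa [mul_pow, ← rpow_mul_natCast hp₁, ← rpow_mul_natCast hp₂, Nat.cast_add,
      div_mul_cancel₀ _ hN.ne', div_mul_cancel₀ _ hN.ne', rpow_natCast, rpow_natCast] at this
  have e₁ : x = p₁ * (k / (k + l)) := by simp only [p₁]; field_simp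
  have e₂ : 1 - x = p₂ * (l / (k + l)) := by simp only [p₂]; field_simp
  calc x ^ k * (1 - x) ^ l = (p₁ * (k / (k + l))) ^ k * (p₂ * (l / (k + l))) ^ l := by
        rw [← e₁, ← e₂]
    _ = p₁ ^ k * p₂ ^ l * ((k / (k + l)) ^ k * (l / (k + l)) ^ l) := by
        rw [mul_pow, mul_pow, mul_mul_mul_comm]
    _ ≤ (k / (k + l)) ^ k * (l / (k + l)) ^ l :=
        mul_le_of_le_one_left (by positivity) hprod

lemma factorial_eq_stirlingSeq_mul (hn : n ≠ 0) :
    (n.factorial : ℝ) = stirlingSeq n * (√(2 * n) * (n / exp 1) ^ n) := by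
  rw [stirlingSeq, div_mul_cancel₀]
  positivity

lemma stirlingSeq_le_of_le {N : ℕ} (hl : l ≠ 0) (hlN : l ≤ N) : stirlingSeq N ≤ stirlingSeq l := by
  obtain ⟨l, rfl⟩ := Nat.exists_eq_succ_of_ne_zero hl
  obtain ⟨N, rfl⟩ := Nat.exists_eq_succ_of_ne_zero (by omega : N ≠ 0)
  exact stirlingSeq'_antitone (Nat.succ_le_succ_iff.1 hlN)

lemma choose_mul_pow_mul_pow_le_sqrt (hk : k ≠ 0) (hl : l ≠ 0) :
    ((k + l).choose k : ℝ) * (k / (k + l)) ^ k * (l / (k + l)) ^ l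
      ≤ √((k + l) / (2 * π * k * l)) := by
  have hk' : (0:ℝ) < k := by positivity
  have hl' : (0:ℝ) < l := by positivity
  have hN : (0:ℝ) < k + l := by positivity
  have hchoose : ((k + l).choose k : ℝ) = (k + l).factorial / (k.factorial * l.factorial) := by
    rw [Nat.cast_choose ℝ (Nat.le_add_right k l), Nat.add_sub_cancel_left]
  -- bound `stirlingSeq (k + l)` by `stirlingSeq l`, which then cancels against `l!`
  have hfacN : ((k + l).factorial : ℝ)
      ≤ stirlingSeq l * (√(2 * (k + l)) * ((k + l) / exp 1) ^ (k + l)) := by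
    rw [factorial_eq_stirlingSeq_mul (by omega)]
    push_cast
    gcongr
    exact stirlingSeq_le_of_le hl (Nat.le_add_left l k)
  have hfack : √(2 * π * k) * (k / exp 1) ^ k ≤ k.factorial := le_factorial_stirling k
  have hfacl := factorial_eq_stirlingSeq_mul hl
  have hpow : ((k + l) / exp 1) ^ (k + l) * (k / (k + l)) ^ k * (l / (k + l)) ^ l
      = (k / exp 1) ^ k * (l / exp 1) ^ l := by
    rw [pow_add, show ∀ a b c : ℝ, a ^ k * a ^ l * b ^ k * c ^ l = (a * b) ^ k * (a * c) ^ l by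
      intros; ring]
    congr 2 <;> field_simp
  have hsqrt : √((k + l) / (2 * π * k * l)) * √(2 * π * k) * √(2 * l) = √(2 * (k + l)) := by
    rw [← sqrt_mul (by positivity), ← sqrt_mul (by positivity)]
    congr 1
    field_simp
  rw [hchoose, div_mul_eq_mul_div, div_mul_eq_mul_div, div_le_iff₀ (by positivity)]
  calc ((k + l).factorial : ℝ) * (k / (k + l)) ^ k * (l / (k + l)) ^ l
      ≤ stirlingSeq l * (√(2 * (k + l)) * ((k + l) / exp 1) ^ (k + l))
          * (k / (k + l)) ^ k * (l / (k + l)) ^ l := by gcongr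
    _ = √((k + l) / (2 * π * k * l)) * ((√(2 * π * k) * (k / exp 1) ^ k) * l.factorial) := by
        rw [hfacl, ← hsqrt]
        linear_combination (stirlingSeq l * √((k + l) / (2 * π * k * l)) * √(2 * π * k)
          * √(2 * l)) * hpow
    _ ≤ √((k + l) / (2 * π * k * l)) * (k.factorial * l.factorial) := by gcongr

lemma choose_mul_pow_mul_pow_le_inv_sqrt (hk : 1 ≤ k) (hkl : k ≤ l) :
    ((k + l).choose k : ℝ) * (k / (k + l)) ^ k * (l / (k + l)) ^ l ≤ 1 / √(2 * (k + 1)) := by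
  -- the Stirling bound needs `(k + l) (k + 1) ≤ π k l`, which fails only for `k = l = 1`
  by_cases h11 : k = 1 ∧ l = 1
  · obtain ⟨rfl, rfl⟩ := h11
    rw [show (2:ℝ) * ((1:ℕ) + 1) = 2 ^ 2 by norm_num, sqrt_sq zero_le_two]
    norm_num
  have hnat : (k + l) * (k + 1) ≤ 3 * k * l := by
    obtain ⟨a, rfl⟩ := Nat.exists_eq_add_of_le hk
    obtain ⟨b, rfl⟩ := Nat.exists_eq_add_of_le hkl
    have : 1 ≤ a + b := by omega
    nlinarith
  have hcast : ((k:ℝ) + l) * (k + 1) ≤ 3 * k * l := by exact_mod_cast hnat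
  have hk' : (1:ℝ) ≤ k := by exact_mod_cast hk
  have hl' : (1:ℝ) ≤ l := by exact_mod_cast hk.trans hkl
  refine (choose_mul_pow_mul_pow_le_sqrt (by omega) (by omega)).trans ?_
  rw [one_div, ← sqrt_inv]
  refine sqrt_le_sqrt ?_
  rw [div_le_iff₀ (by positivity), inv_mul_eq_div, le_div_iff₀ (by positivity)]
  nlinarith [pi_gt_three, mul_pos (by positivity : (0:ℝ) < k) (by positivity : (0:ℝ) < l)]

lemma bernsteinBasis_add_le_inv_sqrt (hk : 1 ≤ k) (hkl : k ≤ l) (hx : x ∈ Set.Icc (0:ℝ) 1) :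
    bernsteinBasis (k + l) k x ≤ 1 / √(2 * (k + 1)) := by
  calc bernsteinBasis (k + l) k x = ((k + l).choose k : ℝ) * (x ^ k * (1 - x) ^ l) := by
        rw [bernsteinBasis, Nat.add_sub_cancel_left, mul_assoc]
    _ ≤ ((k + l).choose k : ℝ) * ((k / (k + l)) ^ k * (l / (k + l)) ^ l) :=
        mul_le_mul_of_nonneg_left (pow_mul_one_sub_pow_le (by omega) (by omega) hx)
          (Nat.cast_nonneg _)
    _ ≤ 1 / √(2 * (k + 1)) := by
        rw [← mul_assoc]
        exact choose_mul_pow_mul_pow_le_inv_sqrt hk hkl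

lemma bernsteinBasis_le_inv_sqrt (hk : 1 ≤ k) (hkn : k < n) (htk : t ≤ k) (htnk : t ≤ n - k)
    (hx : x ∈ Set.Icc (0:ℝ) 1) :
    bernsteinBasis n k x ≤ 1 / √(2 * (t + 1)) := by
  have anti : ∀ {a : ℕ}, t ≤ a → 1 / √(2 * ((a:ℝ) + 1)) ≤ 1 / √(2 * (t + 1)) := fun hta => by
    have : (t:ℝ) ≤ _ := Nat.cast_le.2 hta
    gcongr
  rcases le_total k (n - k) with h | h
  · have := bernsteinBasis_add_le_inv_sqrt hk h hx
    rw [Nat.add_sub_cancel' hkn.le] at this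
    exact this.trans (anti htk)
  · have hx' : 1 - x ∈ Set.Icc (0:ℝ) 1 := ⟨sub_nonneg.2 hx.2, sub_le_self _ hx.1⟩
    have := bernsteinBasis_add_le_inv_sqrt (by omega) h hx'
    rw [Nat.sub_add_cancel hkn.le] at this
    rw [bernsteinBasis_symm hkn.le]
    exact this.trans (anti htnk)

end BernsteinBasis

section ModulusOfContinuity

variable {f : ℝ → ℝ} {x y δ : ℝ}

lemma modCont_bddAbove (hf : ContinuousOn f (Set.Icc 0 1)) (δ : ℝ) :
    BddAbove {d : ℝ | ∃ x ∈ Set.Icc (0:ℝ) 1, ∃ y ∈ Set.Icc (0:ℝ) 1,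
      |x - y| ≤ δ ∧ d = |f x - f y|} := by
  obtain ⟨C, hC⟩ := isCompact_Icc.exists_bound_of_continuousOn hf
  refine ⟨C + C, ?_⟩
  rintro d ⟨x, hx, y, hy, -, rfl⟩
  exact (abs_sub _ _).trans (add_le_add (hC x hx) (hC y hy))

lemma abs_sub_le_modCont (hf : ContinuousOn f (Set.Icc 0 1)) (hx : x ∈ Set.Icc (0:ℝ) 1)
    (hy : y ∈ Set.Icc (0:ℝ) 1) (h : |x - y| ≤ δ) : |f x - f y| ≤ modCont f δ :=
  le_csSup (modCont_bddAbove hf δ) ⟨x, hx, y, hy, h, rfl⟩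

lemma modCont_nonneg (hf : ContinuousOn f (Set.Icc 0 1)) (hδ : 0 ≤ δ) : 0 ≤ modCont f δ := by
  have h0 : (0:ℝ) ∈ Set.Icc (0:ℝ) 1 := ⟨le_rfl, zero_le_one⟩
  simpa using abs_sub_le_modCont hf h0 h0 (by simpa using hδ)

lemma abs_sub_le_nat_mul_modCont (hf : ContinuousOn f (Set.Icc 0 1)) (hδ : 0 ≤ δ) (N : ℕ) :
    ∀ x ∈ Set.Icc (0:ℝ) 1, ∀ y ∈ Set.Icc (0:ℝ) 1, x ≤ y → y - x ≤ N * δ →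
      |f x - f y| ≤ N * modCont f δ := by
  induction N with
  | zero =>
    intro x _ y _ hxy h
    simp [le_antisymm hxy (by simpa [sub_nonpos] using h)]
  | succ N ih =>
    intro x hx y hy hxy h
    set z := max x (y - δ)
    have hzy : z ≤ y := max_le hxy (by linarith)
    have hz : z ∈ Set.Icc (0:ℝ) 1 := ⟨hx.1.trans (le_max_left _ _), hzy.trans hy.2⟩
    have hxz : z - x ≤ N * δ := by
      have : 0 ≤ (N:ℝ) * δ := by positivity
      push_cast at h
      exact sub_le_iff_le_add.2 (max_le (by linarith) (by linarith))
    have hzy' : |z - y| ≤ δ := abs_le.2 ⟨by linarith [le_max_right x (y - δ)], by linarith⟩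
    calc |f x - f y| ≤ |f x - f z| + |f z - f y| := abs_sub_le _ _ _
      _ ≤ N * modCont f δ + modCont f δ :=
          add_le_add (ih x hx z hz (le_max_left _ _) hxz) (abs_sub_le_modCont hf hz hy hzy')
      _ = (N + 1 : ℕ) * modCont f δ := by push_cast; ring

lemma abs_sub_le_one_add_sq_mul_modCont (hf : ContinuousOn f (Set.Icc 0 1)) (hδ : 0 < δ)
    (hx : x ∈ Set.Icc (0:ℝ) 1) (hy : y ∈ Set.Icc (0:ℝ) 1) :
    |f x - f y| ≤ (1 + ((x - y) / δ) ^ 2) * modCont f δ := by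
  wlog hxy : x ≤ y generalizing x y
  · rw [abs_sub_comm, show ((x - y) / δ) ^ 2 = ((y - x) / δ) ^ 2 by ring]
    exact this hy hx (le_of_not_ge hxy)
  set r := (y - x) / δ
  have hr : 0 ≤ r := div_nonneg (sub_nonneg.2 hxy) hδ.le
  have hceil : (⌈r⌉₊ : ℝ) ≤ 1 + r ^ 2 := by
    rcases le_or_gt r 1 with h | h
    · have : ⌈r⌉₊ ≤ 1 := Nat.ceil_le.2 (by simpa using h)
      have : (⌈r⌉₊ : ℝ) ≤ 1 := by exact_mod_cast this
      nlinarith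
    · nlinarith [Nat.ceil_lt_add_one hr]
  have hN : y - x ≤ ⌈r⌉₊ * δ := by
    rw [← div_le_iff₀ hδ]; exact Nat.le_ceil r
  calc |f x - f y| ≤ ⌈r⌉₊ * modCont f δ := abs_sub_le_nat_mul_modCont hf hδ.le _ x hx y hy hxy hN
    _ ≤ (1 + r ^ 2) * modCont f δ := by gcongr; exact modCont_nonneg hf hδ.le
    _ = (1 + ((x - y) / δ) ^ 2) * modCont f δ := by simp only [r]; ring

lemma abs_sub_round_le_modCont (hf : ContinuousOn f (Set.Icc 0 1)) {a : ℝ}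
    (hy : y ∈ Set.Icc (0:ℝ) 1) (ha : a ∈ Set.Icc (0:ℝ) 1) (hfa : ∃ z : ℤ, f a = z)
    (h : |y - a| ≤ δ) : |f y - round (f y)| ≤ modCont f δ := by
  obtain ⟨z, hz⟩ := hfa
  exact (round_le _ z).trans (hz ▸ abs_sub_le_modCont hf hy ha h)

lemma abs_sub_sum_bernsteinBasis_le (hf : ContinuousOn f (Set.Icc 0 1)) {n : ℕ} (hn : n ≠ 0)
    (hx : x ∈ Set.Icc (0:ℝ) 1) :
    |f x - ∑ k ∈ range (n + 1), f (k / n) * bernsteinBasis n k x|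
      ≤ 5 / 4 * modCont f ((n : ℝ) ^ (-(1 / 2 : ℝ))) := by
  have hn' : (0:ℝ) < n := by positivity
  set δ := (n : ℝ) ^ (-(1 / 2 : ℝ))
  have hδ : 0 < δ := rpow_pos_of_pos hn' _
  have hδsq : δ ^ 2 = (n : ℝ)⁻¹ := by
    rw [← rpow_natCast, ← rpow_mul hn'.le]; norm_num [rpow_neg_one]
  have hω := modCont_nonneg hf hδ.le
  have hB := bernsteinBasis_nonneg hx n
  have hterm : ∀ k ∈ range (n + 1), |(f x - f (k / n)) * bernsteinBasis n k x|
      ≤ modCont f δ * bernsteinBasis n k x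
        + modCont f δ / n * ((n * x - k) ^ 2 * bernsteinBasis n k x) := by
    intro k hk
    have hkn : (k : ℝ) / n ∈ Set.Icc (0:ℝ) 1 :=
      ⟨by positivity, div_le_one_of_le₀ (by exact_mod_cast Finset.mem_range_succ_iff.1 hk) hn'.le⟩
    rw [abs_mul, abs_of_nonneg (hB k)]
    calc |f x - f (k / n)| * bernsteinBasis n k x
        ≤ (1 + ((x - k / n) / δ) ^ 2) * modCont f δ * bernsteinBasis n k x := by
          gcongr
          · exact hB k
          · exact abs_sub_le_one_add_sq_mul_modCont hf hδ hx hkn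
      _ = _ := by rw [div_pow, hδsq]; field_simp
  have hsum : f x - ∑ k ∈ range (n + 1), f (k / n) * bernsteinBasis n k x
      = ∑ k ∈ range (n + 1), (f x - f (k / n)) * bernsteinBasis n k x := by
    simp only [sub_mul, sum_sub_distrib, ← mul_sum, sum_bernsteinBasis, mul_one]
  rw [hsum]
  calc _ ≤ ∑ k ∈ range (n + 1), (modCont f δ * bernsteinBasis n k x
        + modCont f δ / n * ((n * x - k) ^ 2 * bernsteinBasis n k x)) :=
        (abs_sum_le_sum_abs _ _).trans (sum_le_sum hterm)
    _ = (1 + x * (1 - x)) * modCont f δ := by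
        rw [sum_add_distrib, ← mul_sum, ← mul_sum, sum_bernsteinBasis, sum_sq_mul_bernsteinBasis]
        field_simp
    _ ≤ 5 / 4 * modCont f δ := by nlinarith [sq_nonneg (2 * x - 1)]

end ModulusOfContinuity

section SummationByParts

variable {lo m hi : ℕ}

lemma sum_Icc_sub_mul_eq (E c : ℕ → ℝ) (h : lo ≤ hi) :
    ∑ k ∈ Icc lo hi, (E (k + 1) - E k) * c k
      = ∑ k ∈ Ico lo hi, E (k + 1) * (c k - c (k + 1)) + E (hi + 1) * c hi - E lo * c lo := by
  induction hi, h using Nat.le_induction with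
  | base => simp; ring
  | succ hi hle ih =>
    rw [sum_Icc_succ_top (by omega), ih, sum_Ico_succ_top hle]
    ring

lemma sum_Ico_abs_sub_succ_of_unimodal (c : ℕ → ℝ) (hlm : lo ≤ m) (hmh : m ≤ hi)
    (hup : ∀ k, lo ≤ k → k < m → c k ≤ c (k + 1))
    (hdown : ∀ k, m ≤ k → k < hi → c (k + 1) ≤ c k) :
    ∑ k ∈ Ico lo hi, |c k - c (k + 1)| = (c m - c lo) + (c m - c hi) := by
  rw [← sum_Ico_consecutive _ hlm hmh]
  congr 1
  · rw [← sum_Ico_sub c hlm]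
    refine sum_congr rfl fun k hk => ?_
    rw [mem_Ico] at hk
    rw [abs_sub_comm, abs_of_nonneg (sub_nonneg.2 (hup k hk.1 hk.2))]
  · rw [← neg_sub (c hi), ← sum_Ico_sub c hmh, ← sum_neg_distrib]
    refine sum_congr rfl fun k hk => ?_
    rw [mem_Ico] at hk
    rw [abs_of_nonneg (sub_nonneg.2 (hdown k hk.1 hk.2)), neg_sub]

lemma abs_sum_Icc_sub_mul_le_of_unimodal {E c : ℕ → ℝ} {M : ℝ} (hE : ∀ k, |E k| ≤ M)
    (hclo : 0 ≤ c lo) (hchi : 0 ≤ c hi) (hlm : lo ≤ m) (hmh : m ≤ hi)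
    (hup : ∀ k, lo ≤ k → k < m → c k ≤ c (k + 1))
    (hdown : ∀ k, m ≤ k → k < hi → c (k + 1) ≤ c k) :
    |∑ k ∈ Icc lo hi, (E (k + 1) - E k) * c k| ≤ 2 * M * c m := by
  rw [sum_Icc_sub_mul_eq E c (hlm.trans hmh)]
  have hM : 0 ≤ M := (abs_nonneg _).trans (hE 0)
  have hbound : ∀ a b, |E a * b| ≤ M * |b| := fun a b => by
    rw [abs_mul]; exact mul_le_mul_of_nonneg_right (hE a) (abs_nonneg b)
  calc _ ≤ ∑ k ∈ Ico lo hi, |E (k + 1) * (c k - c (k + 1))| + |E (hi + 1) * c hi|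
        + |E lo * c lo| := by
        refine (abs_sub _ _).trans ?_
        gcongr
        exact (abs_add_le _ _).trans (by gcongr; exact abs_sum_le_sum_abs _ _)
    _ ≤ M * ∑ k ∈ Ico lo hi, |c k - c (k + 1)| + M * c hi + M * c lo := by
        rw [mul_sum]
        gcongr with k
        · exact hbound _ _
        · exact (hbound _ _).trans_eq (by rw [abs_of_nonneg hchi])
        · exact (hbound _ _).trans_eq (by rw [abs_of_nonneg hclo])
    _ = 2 * M * c m := by
        rw [sum_Ico_abs_sub_succ_of_unimodal c hlm hmh hup hdown]
        ring

end SummationByParts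

noncomputable def nodeSum (f : ℝ → ℝ) (n j : ℕ) : ℝ := ∑ i ∈ range j, f (i / n)

noncomputable def latticeCoeff (f : ℝ → ℝ) (n s k : ℕ) : ℤ :=
  if k ∈ Icc s (n - s) then round (nodeSum f n (k + 1)) - round (nodeSum f n k)
  else round (f (k / n))

section LatticeCoeff

variable {f : ℝ → ℝ} {n s t : ℕ} {x : ℝ}

lemma sub_latticeCoeff_of_mem {k : ℕ} (hk : k ∈ Icc s (n - s)) :
    f (k / n) - latticeCoeff f n s k
      = (nodeSum f n (k + 1) - round (nodeSum f n (k + 1)))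
        - (nodeSum f n k - round (nodeSum f n k)) := by
  rw [latticeCoeff, if_pos hk, nodeSum, nodeSum, sum_range_succ]
  push_cast
  ring

lemma abs_sum_Icc_sub_latticeCoeff_mul_le (hs : 1 ≤ s) (hts : t ≤ s) (hsn : 2 * s ≤ n)
    (hx : x ∈ Set.Icc (0:ℝ) 1) :
    |∑ k ∈ Icc s (n - s), (f (k / n) - latticeCoeff f n s k) * bernsteinBasis n k x|
      ≤ 1 / √(2 * (t + 1)) := by
  obtain ⟨m, ⟨hsm, hmn⟩, hup, hdown⟩ :=
    exists_bernsteinBasis_mode (n := n) (lo := s) (hi := n - s) (by omega) (by omega) hx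
  rw [sum_congr rfl fun k hk => by rw [sub_latticeCoeff_of_mem hk]]
  calc _ ≤ 2 * (1 / 2) * bernsteinBasis n m x :=
        abs_sum_Icc_sub_mul_le_of_unimodal (fun _ => abs_sub_round _)
          (bernsteinBasis_nonneg hx n _) (bernsteinBasis_nonneg hx n _) hsm hmn hup hdown
    _ ≤ 1 / √(2 * (t + 1)) := by
        rw [mul_one_div_cancel two_ne_zero, one_mul]
        exact bernsteinBasis_le_inv_sqrt (by omega) (by omega) (by omega) (by omega) hx

lemma abs_sum_sdiff_sub_latticeCoeff_mul_le (hf : ContinuousOn f (Set.Icc 0 1))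
    (hf0 : ∃ a : ℤ, f 0 = a) (hf1 : ∃ b : ℤ, f 1 = b) (hn : n ≠ 0) (hst : s ≤ t + 1) (hx : x ∈ Set.Icc (0:ℝ) 1) :
    |∑ k ∈ range (n + 1) \ Icc s (n - s),
        (f (k / n) - latticeCoeff f n s k) * bernsteinBasis n k x| ≤ modCont f (t / n) := by
  have hn' : (0:ℝ) < n := by positivity
  have hB := bernsteinBasis_nonneg hx n
  have hnode : ∀ k ∈ range (n + 1) \ Icc s (n - s),
      |f (k / n) - latticeCoeff f n s k| ≤ modCont f (t / n) := by
    intro k hk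
    simp only [mem_sdiff, mem_range, mem_Icc, not_and_or, not_le] at hk
    have hkn : (k : ℝ) ≤ n := by exact_mod_cast (by omega : k ≤ n)
    have hnode : (k : ℝ) / n ∈ Set.Icc (0:ℝ) 1 := ⟨by positivity, div_le_one_of_le₀ hkn hn'.le⟩
    rw [latticeCoeff, if_neg (by simp only [mem_Icc]; omega)]
    rcases hk.2 with hks | hks
    · refine abs_sub_round_le_modCont hf hnode ⟨le_rfl, zero_le_one⟩ hf0 ?_
      rw [sub_zero, abs_of_nonneg (by positivity)]
      gcongr
      exact_mod_cast (by omega : k ≤ t)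
    · refine abs_sub_round_le_modCont hf hnode ⟨zero_le_one, le_rfl⟩ hf1 ?_
      rw [abs_sub_comm, abs_of_nonneg (sub_nonneg.2 hnode.2), one_sub_div hn'.ne']
      gcongr
      have : ((n - k : ℕ) : ℝ) ≤ t := by exact_mod_cast (by omega : n - k ≤ t)
      rwa [Nat.cast_sub (by omega)] at this
  calc _ ≤ ∑ k ∈ range (n + 1) \ Icc s (n - s), modCont f (t / n) * bernsteinBasis n k x := by
        refine (abs_sum_le_sum_abs _ _).trans (sum_le_sum fun k hk => ?_)
        rw [abs_mul, abs_of_nonneg (hB k)]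
        exact mul_le_mul_of_nonneg_right (hnode k hk) (hB k)
    _ ≤ ∑ k ∈ range (n + 1), modCont f (t / n) * bernsteinBasis n k x :=
        sum_le_sum_of_subset_of_nonneg sdiff_subset fun k _ _ =>
          mul_nonneg (modCont_nonneg hf (by positivity)) (hB k)
    _ = modCont f (t / n) := by rw [← mul_sum, sum_bernsteinBasis, mul_one]

end LatticeCoeff

theorem main_theorem_general (f : ℝ → ℝ) (hf : ContinuousOn f (Set.Icc (0:ℝ) 1))
    (hf0 : ∃ a : ℤ, f 0 = (a : ℝ)) (hf1 : ∃ b : ℤ, f 1 = (b : ℝ))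
    (n : ℕ) (hn : 2 ≤ n) (t : ℕ) (ht : 2 * t ≤ n) :
    ∃ q : ℕ → ℤ, ∀ x ∈ Set.Icc (0:ℝ) 1,
      |f x - ∑ k ∈ Finset.range (n + 1),
          (q k : ℝ) * ((n.choose k : ℝ) * x ^ k * (1 - x) ^ (n - k))|
        ≤ 5 / 4 * modCont f ((n : ℝ) ^ (-(1/2 : ℝ)))
          + max (modCont f ((t : ℝ) / n)) (1 / (2 * ((n : ℝ) + 1 - 2 * t)))
          + 1 / Real.sqrt (2 * ((t : ℝ) + 1)) := by
  obtain ⟨s, hs, hts, hst, hsn⟩ : ∃ s, 1 ≤ s ∧ t ≤ s ∧ s ≤ t + 1 ∧ 2 * s ≤ n :=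
    ⟨max t 1, by omega, by omega, by omega, by omega⟩
  refine ⟨latticeCoeff f n s, fun x hx => ?_⟩
  have hbern := abs_sub_sum_bernsteinBasis_le hf (by omega : n ≠ 0) hx
  have hends := abs_sum_sdiff_sub_latticeCoeff_mul_le (n := n) hf hf0 hf1 (by omega) hst hx
  have hmid := abs_sum_Icc_sub_latticeCoeff_mul_le (f := f) hs hts hsn hx
  have hsplit : f x - ∑ k ∈ range (n + 1),
        (latticeCoeff f n s k : ℝ) * ((n.choose k : ℝ) * x ^ k * (1 - x) ^ (n - k))
      = (f x - ∑ k ∈ range (n + 1), f (k / n) * bernsteinBasis n k x)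
        + ∑ k ∈ range (n + 1) \ Icc s (n - s),
            (f (k / n) - latticeCoeff f n s k) * bernsteinBasis n k x
        + ∑ k ∈ Icc s (n - s), (f (k / n) - latticeCoeff f n s k) * bernsteinBasis n k x := by
    have hsub : Icc s (n - s) ⊆ range (n + 1) := fun k hk => by
      rw [mem_Icc] at hk; rw [mem_range]; omega
    rw [add_assoc, sum_sdiff hsub]
    simp only [sub_mul, sum_sub_distrib, bernsteinBasis]
    ring
  rw [hsplit]
  refine (abs_add_three _ _ _).trans ?_
  gcongr
  exact hends.trans (le_max_left _ _)
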